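/- arXiv:2507.06635 — 3 statements merged into one kernel-verified Lean document; each statement's English description precedes it below -/
import Mathlib

section
/- Let c ∈ {1,…,N−W+1} with w ≤ c and c+W−1 ≤ N, and let x = (x_z) be a vector with x_z ∈ [0,1] for z ∈ {1,…,N+w−1} and x_z = 0 for z ∉ {1,…,N+w−1}. Then for every z with c ≤ z ≤ c+W−1, the partial derivative of the window potential satisfies ∂U(x;ε,c)/∂x_z = ρ'(1−x_z) · ( x_z − (1/w)∑_{k=0}^{w−1} ε λ(1 − (1/w)∑_{j=0}^{w−1} ρ(1 − x_{z+j−k})) ) = ρ'(1−x_z)·(x_z − f(z,x;c,w,W,ε)). -/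
open Finset

noncomputable section

namespace SC

/-- λ(x) = L'(x)/L'(1). -/
def lam (L : Polynomial ℝ) (x : ℝ) : ℝ :=
  (Polynomial.derivative L).eval x / (Polynomial.derivative L).eval 1

/-- ρ(x) = R'(x)/R'(1). -/
def rho (R : Polynomial ℝ) (x : ℝ) : ℝ :=
  (Polynomial.derivative R).eval x / (Polynomial.derivative R).eval 1

/-- ρ'(x) = R''(x)/R'(1). -/
def rhoD (R : Polynomial ℝ) (x : ℝ) : ℝ :=
  (Polynomial.derivative (Polynomial.derivative R)).eval x / (Polynomial.derivative R).eval 1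

/-- ε_z = ε for 1 ≤ z ≤ N, 0 otherwise. -/
def epsAt (ε : ℝ) (N : ℕ) (z : ℤ) : ℝ := if 1 ≤ z ∧ z ≤ (N : ℤ) then ε else 0

/-- Windowed DE update f(z, x; c, w, W, ε). -/
def deUpdate (L R : Polynomial ℝ) (ε : ℝ) (N w W : ℕ) (c : ℤ) (x : ℤ → ℝ) (z : ℤ) : ℝ :=
  if c ≤ z ∧ z ≤ c + (W : ℤ) - 1 then
    (1 / (w : ℝ)) * ∑ k ∈ Finset.range w, epsAt ε N (z - (k : ℤ)) *
      lam L (1 - (1 / (w : ℝ)) * ∑ j ∈ Finset.range w, rho R (1 - x (z + (j : ℤ) - (k : ℤ))))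
  else x z

/-- Window potential U(x; ε, c). -/
def windowU (L R : Polynomial ℝ) (ε : ℝ) (w W : ℕ) (c : ℤ) (x : ℤ → ℝ) : ℝ :=
  ∑ z ∈ Finset.Icc (c - ((w : ℤ) - 1)) (c + (W : ℤ) - 1),
    ((1 / (Polynomial.derivative R).eval 1) * (1 - R.eval (1 - x z))
      - x z * rho R (1 - x z)
      - (ε / (Polynomial.derivative L).eval 1) *
          L.eval (1 - (1 / (w : ℝ)) * ∑ j ∈ Finset.range w, rho R (1 - x (z + (j : ℤ)))))

/-- Single-system potential U(x; ε). -/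
def singleU (L R : Polynomial ℝ) (ε : ℝ) (x : ℝ) : ℝ :=
  (1 / (Polynomial.derivative R).eval 1) * (1 - R.eval (1 - x))
    - x * rho R (1 - x)
    - (ε / (Polynomial.derivative L).eval 1) * L.eval (1 - rho R (1 - x))

/-!
The coordinate `x_z` enters the window potential in two places: the variable-node term
`(1/R'(1))(1 - R(1 - x_z)) - x_z ρ(1 - x_z)` at position `z`, whose derivative is `x_z ρ'(1 - x_z)`,
and the check-node arguments `1 - (1/w) ∑_j ρ(1 - x_{y+j})` at the `w` positions `y = z - k`,
`0 ≤ k < w`, each containing `ρ(1 - x_z)` once. The chain rule turns the latter into the terms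
`(ε/w) λ(…) ρ'(1 - x_z)`. Since `w ≤ c` and `c + W ≤ N + 1`, all these positions lie in the window
and carry `ε_{z-k} = ε`, so the sum is the DE update.
-/

def couplingArg (R : Polynomial ℝ) (w : ℕ) (x : ℤ → ℝ) (y : ℤ) : ℝ :=
  1 - (1 / (w : ℝ)) * ∑ j ∈ Finset.range w, rho R (1 - x (y + (j : ℤ)))

theorem hasDerivAt_rho_one_sub (R : Polynomial ℝ) (a : ℝ) :
    HasDerivAt (fun s => rho R (1 - s)) (-rhoD R (1 - a)) a := by
  have h := ((Polynomial.hasDerivAt (Polynomial.derivative R) (1 - a)).comp a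
    ((hasDerivAt_id a).const_sub 1)).div_const ((Polynomial.derivative R).eval 1)
  refine h.congr_deriv ?_
  simp only [rhoD]
  ring

theorem hasDerivAt_variablePotential (R : Polynomial ℝ) (a : ℝ) :
    HasDerivAt (fun s => (1 / (Polynomial.derivative R).eval 1) * (1 - R.eval (1 - s))
      - s * rho R (1 - s)) (a * rhoD R (1 - a)) a := by
  have hR := (((Polynomial.hasDerivAt R (1 - a)).comp a
    ((hasDerivAt_id a).const_sub 1)).const_sub 1).const_mul (1 / (Polynomial.derivative R).eval 1)
  have h := hR.sub ((hasDerivAt_id a).mul (hasDerivAt_rho_one_sub R a))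
  refine h.congr_deriv ?_
  simp only [rho, rhoD, id]
  ring

theorem hasDerivAt_comp_update {ι : Type*} [DecidableEq ι] {φ : ℝ → ℝ} {φ' : ℝ} (x : ι → ℝ)
    (z t : ι) (hφ : HasDerivAt φ φ' (x z)) :
    HasDerivAt (fun s => φ (Function.update x z s t)) (if t = z then φ' else 0) (x z) := by
  by_cases ht : t = z
  · subst ht
    simpa using hφ
  · simpa [Function.update_of_ne ht, ht] using hasDerivAt_const (x z) (φ (x t))

theorem sum_range_ite_add_eq {M : Type*} [AddCommMonoid M] (w : ℕ) (y z : ℤ) (a : M) :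
    ∑ j ∈ Finset.range w, (if y + (j : ℤ) = z then a else 0)
      = if y ∈ Finset.Ioc (z - w) z then a else 0 := by
  by_cases hy : y ∈ Finset.Ioc (z - w) z
  · rw [Finset.mem_Ioc] at hy
    rw [if_pos (Finset.mem_Ioc.2 hy), Finset.sum_eq_single_of_mem (z - y).toNat
      (Finset.mem_range.2 (by omega)), if_pos (by omega)]
    intro j _ hj
    exact if_neg (fun h => hj (by omega))
  · rw [Finset.mem_Ioc] at hy
    rw [if_neg (by rwa [Finset.mem_Ioc]), Finset.sum_eq_zero]
    intro j hj
    rw [Finset.mem_range] at hj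
    exact if_neg (by omega)

theorem sum_Ioc_sub_eq_sum_range {M : Type*} [AddCommMonoid M] (w : ℕ) (z : ℤ) (f : ℤ → M) :
    ∑ y ∈ Finset.Ioc (z - w) z, f y = ∑ k ∈ Finset.range w, f (z - k) :=
  Finset.sum_nbij' (fun y => (z - y).toNat) (fun k => z - k)
    (fun y hy => by simp only [Finset.mem_Ioc, Finset.mem_range] at hy ⊢; omega)
    (fun k hk => by simp only [Finset.mem_Ioc, Finset.mem_range] at hk ⊢; omega)
    (fun y hy => by simp only [Finset.mem_Ioc] at hy; omega)
    (fun k _ => by omega)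
    (fun y hy => by simp only [Finset.mem_Ioc] at hy; congr 1; omega)

theorem hasDerivAt_sum_range_comp_update_add {φ : ℝ → ℝ} {φ' : ℝ} (w : ℕ) (x : ℤ → ℝ)
    (y z : ℤ) (hφ : HasDerivAt φ φ' (x z)) :
    HasDerivAt (fun s => ∑ j ∈ Finset.range w, φ (Function.update x z s (y + (j : ℤ))))
      (if y ∈ Finset.Ioc (z - w) z then φ' else 0) (x z) := by
  rw [← sum_range_ite_add_eq]
  exact HasDerivAt.fun_sum fun j _ => hasDerivAt_comp_update x z _ hφ

theorem hasDerivAt_couplingArg (R : Polynomial ℝ) (w : ℕ) (x : ℤ → ℝ) (y z : ℤ) :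
    HasDerivAt (fun s => couplingArg R w (Function.update x z s) y)
      (if y ∈ Finset.Ioc (z - w) z then (1 / (w : ℝ)) * rhoD R (1 - x z) else 0) (x z) := by
  have h := ((hasDerivAt_sum_range_comp_update_add w x y z
    (hasDerivAt_rho_one_sub R (x z))).const_mul (1 / (w : ℝ))).const_sub 1
  refine h.congr_deriv ?_
  split_ifs <;> ring

theorem hasDerivAt_windowU_summand (L R : Polynomial ℝ) (ε : ℝ) (w : ℕ) (x : ℤ → ℝ) (y z : ℤ) :
    HasDerivAt (fun s =>
      (1 / (Polynomial.derivative R).eval 1) * (1 - R.eval (1 - Function.update x z s y))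
        - Function.update x z s y * rho R (1 - Function.update x z s y)
        - (ε / (Polynomial.derivative L).eval 1) * L.eval (couplingArg R w (Function.update x z s) y))
      ((if y = z then x z * rhoD R (1 - x z) else 0)
        - if y ∈ Finset.Ioc (z - w) z then
            ε / w * lam L (couplingArg R w x y) * rhoD R (1 - x z) else 0) (x z) := by
  have hvar := hasDerivAt_comp_update x z y (hasDerivAt_variablePotential R (x z))
  have hcheck := ((Polynomial.hasDerivAt L _).comp (x z)
    (hasDerivAt_couplingArg R w x y z)).const_mul (ε / (Polynomial.derivative L).eval 1)
  rw [Function.update_eq_self] at hcheck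
  refine (hvar.sub hcheck).congr_deriv ?_
  simp only [lam]
  split_ifs <;> ring

theorem sum_ite_eq_sub_ite_mem_Ioc {M : Type*} [AddCommGroup M] {s : Finset ℤ} {z : ℤ} {w : ℕ}
    (hz : z ∈ s) (hIoc : Finset.Ioc (z - w) z ⊆ s) (a : M) (f : ℤ → M) :
    ∑ y ∈ s, ((if y = z then a else 0) - if y ∈ Finset.Ioc (z - w) z then f y else 0)
      = a - ∑ k ∈ Finset.range w, f (z - k) := by
  rw [Finset.sum_sub_distrib, Finset.sum_ite_eq' s z, if_pos hz, Finset.sum_ite_mem,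
    Finset.inter_eq_right.2 hIoc, sum_Ioc_sub_eq_sum_range]

theorem couplingArg_sub (R : Polynomial ℝ) (w : ℕ) (x : ℤ → ℝ) (z k : ℤ) :
    couplingArg R w x (z - k)
      = 1 - (1 / (w : ℝ)) * ∑ j ∈ Finset.range w, rho R (1 - x (z + (j : ℤ) - k)) := by
  simp only [couplingArg, sub_add_eq_add_sub]

theorem deUpdate_eq_of_mem_window (L R : Polynomial ℝ) (ε : ℝ) {N w W : ℕ} {c : ℤ} (x : ℤ → ℝ)
    {z : ℤ} (hz1 : c ≤ z) (hz2 : z ≤ c + W - 1) (hwz : w ≤ z) (hzN : z ≤ N) :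
    deUpdate L R ε N w W c x z
      = (1 / (w : ℝ)) * ∑ k ∈ Finset.range w, ε * lam L (couplingArg R w x (z - k)) := by
  rw [deUpdate, if_pos ⟨hz1, hz2⟩]
  refine congrArg _ (Finset.sum_congr rfl fun k hk => ?_)
  rw [Finset.mem_range] at hk
  rw [epsAt, if_pos ⟨by omega, by omega⟩, couplingArg_sub]

theorem windowU_partial_deriv_general
    (L R : Polynomial ℝ)
    (ε : ℝ)
    (N w W : ℕ) (hw : 1 ≤ w)
    (c : ℕ) (hc1 : w ≤ c) (hc2 : c + W ≤ N + 1)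
    (x : ℤ → ℝ)
    (z : ℤ) (hz1 : (c : ℤ) ≤ z) (hz2 : z ≤ (c : ℤ) + (W : ℤ) - 1) :
    HasDerivAt (fun s : ℝ => windowU L R ε w W (c : ℤ) (Function.update x z s))
      (rhoD R (1 - x z) *
        (x z - (1 / (w : ℝ)) * ∑ k ∈ Finset.range w,
          ε * lam L (1 - (1 / (w : ℝ)) *
            ∑ j ∈ Finset.range w, rho R (1 - x (z + (j : ℤ) - (k : ℤ))))))
      (x z) ∧
    rhoD R (1 - x z) *
        (x z - (1 / (w : ℝ)) * ∑ k ∈ Finset.range w,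
          ε * lam L (1 - (1 / (w : ℝ)) *
            ∑ j ∈ Finset.range w, rho R (1 - x (z + (j : ℤ) - (k : ℤ)))))
      = rhoD R (1 - x z) * (x z - deUpdate L R ε N w W (c : ℤ) x z) := by
  have hz : z ∈ Finset.Icc ((c : ℤ) - ((w : ℤ) - 1)) ((c : ℤ) + (W : ℤ) - 1) :=
    Finset.mem_Icc.2 ⟨by omega, hz2⟩
  have hIoc : Finset.Ioc (z - w) z ⊆ Finset.Icc ((c : ℤ) - ((w : ℤ) - 1)) ((c : ℤ) + (W : ℤ) - 1) :=
    fun t ht => by rw [Finset.mem_Ioc] at ht; exact Finset.mem_Icc.2 ⟨by omega, by omega⟩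
  have hderiv : HasDerivAt (fun s : ℝ => windowU L R ε w W (c : ℤ) (Function.update x z s)) _ _ :=
    HasDerivAt.fun_sum fun y _ => hasDerivAt_windowU_summand L R ε w x y z
  rw [sum_ite_eq_sub_ite_mem_Ioc hz hIoc] at hderiv
  simp only [couplingArg_sub] at hderiv
  refine ⟨hderiv.congr_deriv ?_, ?_⟩
  · rw [mul_sub, Finset.mul_sum, Finset.mul_sum]
    exact congrArg₂ _ (mul_comm _ _) (Finset.sum_congr rfl fun k _ => by ring)
  · rw [deUpdate_eq_of_mem_window L R ε x hz1 hz2 (by omega) (by omega)]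
    simp only [couplingArg_sub]

/-- the partial derivative of the window potential with respect to the
coordinate `x_z` (for `z` inside the window, away from the boundary) equals
`ρ'(1−x_z)·(x_z − f(z,x;c,w,W,ε))`. -/
theorem windowU_partial_deriv
    (L R : Polynomial ℝ)
    (hLcoeff : ∀ i, 0 ≤ L.coeff i) (hRcoeff : ∀ i, 0 ≤ R.coeff i)
    (hL1 : L.eval 1 = 1) (hR1 : R.eval 1 = 1)
    (hL'pos : 0 < (Polynomial.derivative L).eval 1)
    (hR'pos : 0 < (Polynomial.derivative R).eval 1)
    (ε : ℝ) (hε0 : 0 ≤ ε) (hε1 : ε ≤ 1)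
    (N w W : ℕ) (hw : 1 ≤ w) (hwW : w ≤ W) (hWN : W ≤ N)
    (c : ℕ) (hc1 : w ≤ c) (hc2 : c + W ≤ N + 1)
    (x : ℤ → ℝ)
    (hxin : ∀ z : ℤ, 1 ≤ z → z ≤ (N : ℤ) + (w : ℤ) - 1 → x z ∈ Set.Icc (0 : ℝ) 1)
    (hxout : ∀ z : ℤ, ¬ (1 ≤ z ∧ z ≤ (N : ℤ) + (w : ℤ) - 1) → x z = 0)
    (z : ℤ) (hz1 : (c : ℤ) ≤ z) (hz2 : z ≤ (c : ℤ) + (W : ℤ) - 1) :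
    HasDerivAt (fun s : ℝ => windowU L R ε w W (c : ℤ) (Function.update x z s))
      (rhoD R (1 - x z) *
        (x z - (1 / (w : ℝ)) * ∑ k ∈ Finset.range w,
          ε * lam L (1 - (1 / (w : ℝ)) *
            ∑ j ∈ Finset.range w, rho R (1 - x (z + (j : ℤ) - (k : ℤ))))))
      (x z) ∧
    rhoD R (1 - x z) *
        (x z - (1 / (w : ℝ)) * ∑ k ∈ Finset.range w,
          ε * lam L (1 - (1 / (w : ℝ)) *
            ∑ j ∈ Finset.range w, rho R (1 - x (z + (j : ℤ) - (k : ℤ)))))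
      = rhoD R (1 - x z) * (x z - deUpdate L R ε N w W (c : ℤ) x z) :=
  windowU_partial_deriv_general L R ε N w W hw c hc1 hc2 x z hz1 hz2

end SC
end
end

section
/- Assume all DE values lie in [0,1]. Then for every window index c with 2 ≤ c ≤ N−W+1 and every position z with c ≤ z ≤ c+W−2 (so that both z and z−1 belong to the previous window {c−1,…,c+W−2}), the initial values of the c-th window satisfy x_z^{(c,0)} − x_{z−1}^{(c,0)} = (1/w)·( ε_z λ(1 − (1/w)∑_{j=0}^{w−1} ρ(1 − x_{z+j}^{(c−1,T−1)})) − ε_{z−w} λ(1 − (1/w)∑_{j=0}^{w−1} ρ(1 − x_{z+j−w}^{(c−1,T−1)})) ) and in particular x_z^{(c,0)} − x_{z−1}^{(c,0)} ≤ ε/w. -/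
open Finset

noncomputable section

namespace SC

/-! The initial values of window `c` are the outputs of the last update of window `c - 1`, each an
average of `w` shifted copies of one term `ε_m λ(…)` evaluated on the same vector. The difference of
two neighbouring averages telescopes to its two extreme terms, each of which lies in `[0, ε]`. -/

lemma eval_nonneg_of_coeff_nonneg {P : Polynomial ℝ} (hP : ∀ i, 0 ≤ P.coeff i) {x : ℝ}
    (hx : 0 ≤ x) : 0 ≤ P.eval x := by
  rw [Polynomial.eval_eq_sum_range]
  exact sum_nonneg fun i _ => mul_nonneg (hP i) (pow_nonneg hx i)

lemma eval_le_eval_of_coeff_nonneg {P : Polynomial ℝ} (hP : ∀ i, 0 ≤ P.coeff i) {x y : ℝ}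
    (hx : 0 ≤ x) (hxy : x ≤ y) : P.eval x ≤ P.eval y := by
  rw [Polynomial.eval_eq_sum_range, Polynomial.eval_eq_sum_range]
  exact sum_le_sum fun i _ => mul_le_mul_of_nonneg_left (pow_le_pow_left₀ hx hxy i) (hP i)

lemma coeff_derivative_nonneg {P : Polynomial ℝ} (hP : ∀ i, 0 ≤ P.coeff i) (i : ℕ) :
    0 ≤ (Polynomial.derivative P).coeff i := by
  rw [Polynomial.coeff_derivative]
  exact mul_nonneg (hP _) (by positivity)

/-- If `L'(1) = 0`, division by zero makes `lam L` identically `0`. -/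
lemma lam_mem_Icc {L : Polynomial ℝ} (hL : ∀ i, 0 ≤ L.coeff i) {u : ℝ}
    (hu : u ∈ Set.Icc (0 : ℝ) 1) : lam L u ∈ Set.Icc (0 : ℝ) 1 := by
  have hL' := coeff_derivative_nonneg hL
  have hL'1 : 0 ≤ (Polynomial.derivative L).eval 1 :=
    eval_nonneg_of_coeff_nonneg hL' zero_le_one
  exact ⟨div_nonneg (eval_nonneg_of_coeff_nonneg hL' hu.1) hL'1,
    div_le_one_of_le₀ (eval_le_eval_of_coeff_nonneg hL' hu.1 hu.2) hL'1⟩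

lemma rho_mem_Icc {R : Polynomial ℝ} (hR : ∀ i, 0 ≤ R.coeff i) {u : ℝ}
    (hu : u ∈ Set.Icc (0 : ℝ) 1) : rho R u ∈ Set.Icc (0 : ℝ) 1 :=
  lam_mem_Icc hR hu

lemma one_sub_avg_mem_Icc {w : ℕ} {f : ℕ → ℝ}
    (hf : ∀ j ∈ range w, f j ∈ Set.Icc (0 : ℝ) 1) :
    1 - (1 / (w : ℝ)) * ∑ j ∈ range w, f j ∈ Set.Icc (0 : ℝ) 1 := by
  have hsum_nonneg : 0 ≤ ∑ j ∈ range w, f j := sum_nonneg fun j hj => (hf j hj).1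
  have hsum_le : ∑ j ∈ range w, f j ≤ w := by
    simpa using sum_le_sum fun j hj => (hf j hj).2
  rw [one_div_mul_eq_div]
  exact ⟨sub_nonneg.2 (div_le_one_of_le₀ hsum_le w.cast_nonneg),
    sub_le_self _ (div_nonneg hsum_nonneg w.cast_nonneg)⟩

lemma epsAt_mem_Icc {ε : ℝ} (hε : 0 ≤ ε) (N : ℕ) (z : ℤ) : epsAt ε N z ∈ Set.Icc 0 ε := by
  unfold epsAt
  split_ifs <;> simp [hε]

/-- The `k`-th summand of `deUpdate L R ε N w W c x z` is `varNodeTerm L R ε N w x (z - k)`. -/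
def varNodeTerm (L R : Polynomial ℝ) (ε : ℝ) (N w : ℕ) (x : ℤ → ℝ) (m : ℤ) : ℝ :=
  epsAt ε N m * lam L (1 - (1 / (w : ℝ)) * ∑ j ∈ range w, rho R (1 - x (m + j)))

lemma varNodeTerm_mem_Icc {L R : Polynomial ℝ} (hL : ∀ i, 0 ≤ L.coeff i)
    (hR : ∀ i, 0 ≤ R.coeff i) {ε : ℝ} (hε : 0 ≤ ε) (N w : ℕ) {x : ℤ → ℝ}
    (hx : ∀ m, x m ∈ Set.Icc (0 : ℝ) 1) (m : ℤ) :
    varNodeTerm L R ε N w x m ∈ Set.Icc 0 ε := by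
  have hρ : ∀ j ∈ range w, rho R (1 - x (m + j)) ∈ Set.Icc (0 : ℝ) 1 := fun j _ =>
    rho_mem_Icc hR ⟨sub_nonneg.2 (hx _).2, sub_le_self _ (hx _).1⟩
  have hlam := lam_mem_Icc hL (one_sub_avg_mem_Icc hρ)
  have heps := epsAt_mem_Icc hε N m
  exact ⟨mul_nonneg heps.1 hlam.1, (mul_le_of_le_one_right heps.1 hlam.2).trans heps.2⟩

lemma deUpdate_eq_sum_varNodeTerm (L R : Polynomial ℝ) (ε : ℝ) (N w W : ℕ) {c z : ℤ}
    (x : ℤ → ℝ) (hcz : c ≤ z) (hzW : z ≤ c + W - 1) :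
    deUpdate L R ε N w W c x z
      = (1 / (w : ℝ)) * ∑ k ∈ range w, varNodeTerm L R ε N w x (z - k) := by
  simp only [deUpdate, if_pos (And.intro hcz hzW), varNodeTerm, sub_add_eq_add_sub]

lemma sum_range_sub_sum_range_pred (F : ℤ → ℝ) (z : ℤ) (w : ℕ) :
    ∑ k ∈ range w, F (z - k) - ∑ k ∈ range w, F (z - 1 - k) = F z - F (z - w) := by
  have hshift : ∀ k ∈ range w, F (z - 1 - k) = F (z - ((k + 1 : ℕ) : ℤ)) := fun k _ => by
    congr 1; push_cast; ring
  rw [sum_congr rfl hshift, ← sum_sub_distrib, sum_range_sub' (fun k : ℕ => F (z - k))]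
  simp

lemma deUpdate_sub_deUpdate_pred (L R : Polynomial ℝ) (ε : ℝ) (N w W : ℕ) {c z : ℤ}
    (x : ℤ → ℝ) (hcz : c + 1 ≤ z) (hzW : z ≤ c + W - 1) :
    deUpdate L R ε N w W c x z - deUpdate L R ε N w W c x (z - 1)
      = (1 / (w : ℝ)) * (varNodeTerm L R ε N w x z - varNodeTerm L R ε N w x (z - w)) := by
  rw [deUpdate_eq_sum_varNodeTerm L R ε N w W x (by omega) hzW,
    deUpdate_eq_sum_varNodeTerm L R ε N w W x (by omega) (by omega), ← mul_sub,
    sum_range_sub_sum_range_pred]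

theorem initial_gap_formula_general
    (L R : Polynomial ℝ)
    (hLcoeff : ∀ i, 0 ≤ L.coeff i) (hRcoeff : ∀ i, 0 ≤ R.coeff i)
    (ε : ℝ) (hε0 : 0 ≤ ε)
    (N w W T : ℕ) (hT : 1 ≤ T)
    -- the windowed-decoding DE solution
    (X : ℕ → ℕ → ℤ → ℝ)
    (hupd : ∀ c : ℕ, 1 ≤ c → c + W ≤ N + 1 → ∀ t : ℕ, t + 1 ≤ T →
      ∀ z : ℤ, 1 ≤ z → z ≤ (N : ℤ) + (w : ℤ) - 1 →
      X c (t + 1) z = deUpdate L R ε N w W (c : ℤ) (X c t) z)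
    (hshiftwin : ∀ c : ℕ, 1 ≤ c → (c + 1) + W ≤ N + 1 → ∀ z : ℤ, X (c + 1) 0 z = X c T z)
    -- all DE values lie in [0,1]
    (hrange : ∀ c t : ℕ, ∀ z : ℤ, 0 ≤ X c t z ∧ X c t z ≤ 1) :
    ∀ c : ℕ, 2 ≤ c → c + W ≤ N + 1 → ∀ z : ℤ, (c : ℤ) ≤ z → z ≤ (c : ℤ) + (W : ℤ) - 2 →
      (X c 0 z - X c 0 (z - 1)
        = (1 / (w : ℝ)) *
          (epsAt ε N z *
              lam L (1 - (1 / (w : ℝ)) * ∑ j ∈ Finset.range w,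
                rho R (1 - X (c - 1) (T - 1) (z + (j : ℤ))))
            - epsAt ε N (z - (w : ℤ)) *
              lam L (1 - (1 / (w : ℝ)) * ∑ j ∈ Finset.range w,
                rho R (1 - X (c - 1) (T - 1) (z + (j : ℤ) - (w : ℤ)))))) ∧
      X c 0 z - X c 0 (z - 1) ≤ ε / (w : ℝ) := by
  intro c hc hcW z hz hz'
  obtain ⟨c, rfl⟩ : ∃ c', c = c' + 1 := ⟨c - 1, by omega⟩
  obtain ⟨T, rfl⟩ : ∃ T', T = T' + 1 := ⟨T - 1, by omega⟩
  have hstep : ∀ m : ℤ, 1 ≤ m → m ≤ (N : ℤ) + w - 1 →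
      X (c + 1) 0 m = deUpdate L R ε N w W c (X c T) m := fun m hm1 hmN =>
    (hshiftwin c (by omega) hcW m).trans (hupd c (by omega) (by omega) T le_rfl m hm1 hmN)
  have hgap : X (c + 1) 0 z - X (c + 1) 0 (z - 1)
      = (1 / (w : ℝ)) * (varNodeTerm L R ε N w (X c T) z
          - varNodeTerm L R ε N w (X c T) (z - w)) := by
    rw [hstep z (by omega) (by omega), hstep (z - 1) (by omega) (by omega)]
    exact deUpdate_sub_deUpdate_pred L R ε N w W _ (by omega) (by omega)
  have hterm := varNodeTerm_mem_Icc hLcoeff hRcoeff hε0 N w (hrange c T)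
  refine ⟨?_, ?_⟩
  · simpa only [varNodeTerm, sub_add_eq_add_sub, Nat.add_sub_cancel] using hgap
  · rw [hgap, one_div_mul_eq_div]
    gcongr
    linarith [(hterm z).2, (hterm (z - w)).1]

/-- telescoping formula for the initial gap in a window, and the resulting
bound `x_z^{(c,0)} − x_{z−1}^{(c,0)} ≤ ε/w`. -/
theorem initial_gap_formula
    (L R : Polynomial ℝ)
    (hLcoeff : ∀ i, 0 ≤ L.coeff i) (hRcoeff : ∀ i, 0 ≤ R.coeff i)
    (hL1 : L.eval 1 = 1) (hR1 : R.eval 1 = 1)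
    (hL'pos : 0 < (Polynomial.derivative L).eval 1)
    (hR'pos : 0 < (Polynomial.derivative R).eval 1)
    (ε : ℝ) (hε0 : 0 ≤ ε) (hε1 : ε ≤ 1)
    (N w W T : ℕ) (hw : 1 ≤ w) (hwW : w ≤ W) (hWN : W ≤ N) (hT : 1 ≤ T)
    -- the windowed-decoding DE solution
    (X : ℕ → ℕ → ℤ → ℝ)
    (hinit : ∀ z : ℤ, 1 ≤ z → z ≤ (N : ℤ) + (w : ℤ) - 1 → X 1 0 z = 1)
    (hout : ∀ c t : ℕ, ∀ z : ℤ, ¬ (1 ≤ z ∧ z ≤ (N : ℤ) + (w : ℤ) - 1) → X c t z = 0)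
    (hupd : ∀ c : ℕ, 1 ≤ c → c + W ≤ N + 1 → ∀ t : ℕ, t + 1 ≤ T →
      ∀ z : ℤ, 1 ≤ z → z ≤ (N : ℤ) + (w : ℤ) - 1 →
      X c (t + 1) z = deUpdate L R ε N w W (c : ℤ) (X c t) z)
    (hshiftwin : ∀ c : ℕ, 1 ≤ c → (c + 1) + W ≤ N + 1 → ∀ z : ℤ, X (c + 1) 0 z = X c T z)
    -- all DE values lie in [0,1]
    (hrange : ∀ c t : ℕ, ∀ z : ℤ, 0 ≤ X c t z ∧ X c t z ≤ 1) :
    ∀ c : ℕ, 2 ≤ c → c + W ≤ N + 1 → ∀ z : ℤ, (c : ℤ) ≤ z → z ≤ (c : ℤ) + (W : ℤ) - 2 →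
      (X c 0 z - X c 0 (z - 1)
        = (1 / (w : ℝ)) *
          (epsAt ε N z *
              lam L (1 - (1 / (w : ℝ)) * ∑ j ∈ Finset.range w,
                rho R (1 - X (c - 1) (T - 1) (z + (j : ℤ))))
            - epsAt ε N (z - (w : ℤ)) *
              lam L (1 - (1 / (w : ℝ)) * ∑ j ∈ Finset.range w,
                rho R (1 - X (c - 1) (T - 1) (z + (j : ℤ) - (w : ℤ)))))) ∧
      X c 0 z - X c 0 (z - 1) ≤ ε / (w : ℝ) :=
  initial_gap_formula_general L R hLcoeff hRcoeff ε hε0 N w W T hT X hupd hshiftwin hrange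

end SC
end
end

section
/- Let g : [a,b] → ℝ be differentiable with derivative g' that is D-Lipschitz on [a,b] for some D > 0, and suppose g is convex on [a,b] (equivalently g' is nondecreasing on [a,b]). Then for every partition a = g_0 ≤ g_1 ≤ … ≤ g_m = b, ∑_{i=1}^{m} g'(g_i)·(g_i − g_{i−1}) ≥ g(b) − g(a) + (1/(2D))·∑_{i=1}^{m} (g'(g_i) − g'(g_{i−1}))² ≥ g(b) − g(a) + (g'(b) − g'(a))² / (2 D m). -/
/-!
On a cell `[u, v]` of the partition put `Δ = g' v - g' u` and `s = Δ / D ≤ v - u`. The Lipschitz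
bound gives `g' t ≤ g' u + D (t - u)` on `[u, u + s]` and monotonicity gives `g' t ≤ g' v` on
`[u + s, v]`; integrating, the rectangle `g' v (v - u)` exceeds `g v - g u` by at least the triangle
`Δ² / (2D)`. Summing over the cells telescopes, and Cauchy–Schwarz gives `(∑ Δᵢ)² ≤ m ∑ Δᵢ²`.
-/

open Finset Set

lemma mem_Icc_of_le_succ {α : Type*} [Preorder α] {p : ℕ → α} {m : ℕ}
    (hp : ∀ i < m, p i ≤ p (i + 1)) {i : ℕ} (hi : i ≤ m) : p i ∈ Icc (p 0) (p m) := by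
  have hmono : Monotone fun j => p (min j m) := monotone_nat_of_le_succ fun j => by
    rcases lt_or_ge j m with hj | hj
    · simpa [min_eq_left hj.le, min_eq_left (Nat.succ_le_of_lt hj)] using hp j hj
    · simp [min_eq_right hj, min_eq_right (hj.trans j.le_succ)]
  constructor
  · simpa [hi] using hmono (Nat.zero_le i)
  · simpa [hi] using hmono hi

lemma sub_le_sub_of_hasDerivAt_le {f φ f' φ' : ℝ → ℝ} {u v : ℝ} (huv : u ≤ v)
    (hf : ∀ t ∈ Icc u v, HasDerivAt f (f' t) t) (hφ : ∀ t ∈ Icc u v, HasDerivAt φ (φ' t) t)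
    (hle : ∀ t ∈ Ioo u v, f' t ≤ φ' t) : f v - f u ≤ φ v - φ u := by
  have hderiv : ∀ t ∈ Icc u v, HasDerivAt (φ - f) (φ' t - f' t) t :=
    fun t ht => (hφ t ht).sub (hf t ht)
  have hmono : MonotoneOn (φ - f) (Icc u v) := by
    refine monotoneOn_of_hasDerivWithinAt_nonneg (f' := fun t => φ' t - f' t) (convex_Icc u v)
      (fun t ht => (hderiv t ht).continuousAt.continuousWithinAt) (fun t ht => ?_) (fun t ht => ?_)
    · exact (hderiv t (interior_subset ht)).hasDerivWithinAt
    · rw [interior_Icc] at ht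
      exact sub_nonneg.2 (hle t ht)
  have := hmono (left_mem_Icc.2 huv) (right_mem_Icc.2 huv) huv
  simp only [Pi.sub_apply] at this
  linarith

variable {g g' : ℝ → ℝ} {u v : ℝ}

lemma sub_le_deriv_right_mul (huv : u ≤ v) (hg : ∀ t ∈ Icc u v, HasDerivAt g (g' t) t)
    (hmono : MonotoneOn g' (Icc u v)) : g v - g u ≤ g' v * (v - u) := by
  have hlin : ∀ t ∈ Icc u v, HasDerivAt (fun t => g' v * t) (g' v) t :=
    fun t _ => (hasDerivAt_id t).const_mul (g' v) |>.congr_deriv (mul_one _)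
  have := sub_le_sub_of_hasDerivAt_le huv hg hlin fun t ht =>
    hmono (Ioo_subset_Icc_self ht) (right_mem_Icc.2 huv) ht.2.le
  linarith

lemma sub_le_deriv_left_mul_add {D : ℝ} (huv : u ≤ v) (hg : ∀ t ∈ Icc u v, HasDerivAt g (g' t) t)
    (hlip : ∀ t ∈ Icc u v, g' t - g' u ≤ D * (t - u)) :
    g v - g u ≤ g' u * (v - u) + D * (v - u) ^ 2 / 2 := by
  have hquad : ∀ t ∈ Icc u v,
      HasDerivAt (fun t => g' u * t + D * (t - u) ^ 2 / 2) (g' u + D * (t - u)) t := fun t _ =>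
    (((hasDerivAt_id' t).const_mul (g' u)).add
      ((((hasDerivAt_id' t).sub_const u).fun_pow 2).const_mul D |>.div_const 2)).congr_deriv
      (by ring)
  have := sub_le_sub_of_hasDerivAt_le huv hg hquad fun t ht =>
    by linarith [hlip t (Ioo_subset_Icc_self ht)]
  simp only [sub_self] at this
  linarith

lemma sub_add_sq_sub_div_le_deriv_right_mul {D : ℝ} (hD : 0 < D) (huv : u ≤ v)
    (hg : ∀ t ∈ Icc u v, HasDerivAt g (g' t) t) (hmono : MonotoneOn g' (Icc u v))
    (hlip : ∀ t ∈ Icc u v, g' t - g' u ≤ D * (t - u)) :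
    g v - g u + (g' v - g' u) ^ 2 / (2 * D) ≤ g' v * (v - u) := by
  obtain ⟨s, hs0, hsv, hΔ⟩ : ∃ s, 0 ≤ s ∧ s ≤ v - u ∧ g' v - g' u = D * s := by
    refine ⟨(g' v - g' u) / D, div_nonneg ?_ hD.le, div_le_of_le_mul₀ hD.le (by linarith) ?_,
      by field_simp⟩
    · exact sub_nonneg.2 (hmono (left_mem_Icc.2 huv) (right_mem_Icc.2 huv) huv)
    · linarith [hlip v (right_mem_Icc.2 huv)]
  have hsplit : u + s ∈ Icc u v := ⟨by linarith, by linarith⟩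
  have hleft := sub_le_deriv_left_mul_add (le_add_of_nonneg_right hs0)
    (fun t ht => hg t (Icc_subset_Icc_right hsplit.2 ht))
    (fun t ht => hlip t (Icc_subset_Icc_right hsplit.2 ht))
  have hright := sub_le_deriv_right_mul hsplit.2
    (fun t ht => hg t (Icc_subset_Icc_left hsplit.1 ht)) (hmono.mono (Icc_subset_Icc_left hsplit.1))
  have htriangle : (g' v - g' u) ^ 2 / (2 * D) = D * s ^ 2 / 2 := by
    rw [hΔ]; field_simp
  rw [htriangle]
  nlinarith

lemma sq_sub_div_le_sum_sq_sub (f : ℕ → ℝ) (m : ℕ) :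
    (f m - f 0) ^ 2 / m ≤ ∑ i ∈ range m, (f (i + 1) - f i) ^ 2 := by
  refine div_le_of_le_mul₀ m.cast_nonneg (sum_nonneg fun i _ => sq_nonneg _) ?_
  have h := sq_sum_le_card_mul_sum_sq (s := range m) (f := fun i => f (i + 1) - f i)
  rw [sum_range_sub, card_range] at h
  linarith

theorem partition_lemma_convex_general
    (a b D : ℝ) (hD : 0 < D)
    (g g' : ℝ → ℝ)
    (hderiv : ∀ x ∈ Set.Icc a b, HasDerivAt g (g' x) x)
    (hlip : ∀ x ∈ Set.Icc a b, ∀ y ∈ Set.Icc a b, |g' x - g' y| ≤ D * |x - y|)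
    (hmono : ∀ x ∈ Set.Icc a b, ∀ y ∈ Set.Icc a b, x ≤ y → g' x ≤ g' y)
    (m : ℕ) (p : ℕ → ℝ) (hp0 : p 0 = a) (hpm : p m = b)
    (hpmono : ∀ i : ℕ, i < m → p i ≤ p (i + 1)) :
    (∑ i ∈ Finset.range m, g' (p (i + 1)) * (p (i + 1) - p i)
      ≥ g b - g a + (1 / (2 * D)) * ∑ i ∈ Finset.range m, (g' (p (i + 1)) - g' (p i)) ^ 2) ∧
    (g b - g a + (1 / (2 * D)) * ∑ i ∈ Finset.range m, (g' (p (i + 1)) - g' (p i)) ^ 2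
      ≥ g b - g a + (g' b - g' a) ^ 2 / (2 * D * (m : ℝ))) := by
  have hmem : ∀ i ≤ m, p i ∈ Icc a b := fun i hi => hp0 ▸ hpm ▸ mem_Icc_of_le_succ hpmono hi
  have hstep : ∀ i ∈ range m, g (p (i + 1)) - g (p i) + (g' (p (i + 1)) - g' (p i)) ^ 2 / (2 * D)
      ≤ g' (p (i + 1)) * (p (i + 1) - p i) := fun i hi => by
    have hi : i < m := mem_range.1 hi
    have hsub : Icc (p i) (p (i + 1)) ⊆ Icc a b := Icc_subset_Icc (hmem i hi.le).1 (hmem _ hi).2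
    refine sub_add_sq_sub_div_le_deriv_right_mul hD (hpmono i hi) (fun t ht => hderiv t (hsub ht))
      (fun x hx y hy => hmono x (hsub hx) y (hsub hy)) fun t ht => ?_
    have := hlip t (hsub ht) (p i) (hmem i hi.le)
    rw [abs_of_nonneg (sub_nonneg.2 ht.1)] at this
    exact (le_abs_self _).trans this
  have htelescope := sum_range_sub (fun i => g (p i)) m
  simp only [hp0, hpm] at htelescope
  constructor
  · have := sum_le_sum hstep
    rw [sum_add_distrib, htelescope, ← sum_div] at this
    rw [one_div_mul_eq_div]
    linarith
  · have := sq_sub_div_le_sum_sq_sub (fun i => g' (p i)) m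
    simp only [hp0, hpm] at this
    rw [one_div_mul_eq_div, mul_comm (2 * D), ← div_div _ (m : ℝ)]
    linarith [div_le_div_of_nonneg_right this (by positivity : (0 : ℝ) ≤ 2 * D)]

/-- generic partition lemma in a convex region. For a differentiable `g` on
`[a,b]` whose derivative `g'` is `D`-Lipschitz and nondecreasing on `[a,b]`, the right Riemann
sum of `g'` over any partition dominates `g(b) − g(a)` plus `(1/(2D))` times the sum of squared
derivative increments, which in turn dominates `g(b) − g(a) + (g'(b) − g'(a))²/(2Dm)`. -/
theorem partition_lemma_convex
    (a b D : ℝ) (hab : a ≤ b) (hD : 0 < D)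
    (g g' : ℝ → ℝ)
    (hderiv : ∀ x ∈ Set.Icc a b, HasDerivAt g (g' x) x)
    (hlip : ∀ x ∈ Set.Icc a b, ∀ y ∈ Set.Icc a b, |g' x - g' y| ≤ D * |x - y|)
    (hmono : ∀ x ∈ Set.Icc a b, ∀ y ∈ Set.Icc a b, x ≤ y → g' x ≤ g' y)
    (m : ℕ) (p : ℕ → ℝ) (hp0 : p 0 = a) (hpm : p m = b)
    (hpmono : ∀ i : ℕ, i < m → p i ≤ p (i + 1)) :
    (∑ i ∈ Finset.range m, g' (p (i + 1)) * (p (i + 1) - p i)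
      ≥ g b - g a + (1 / (2 * D)) * ∑ i ∈ Finset.range m, (g' (p (i + 1)) - g' (p i)) ^ 2) ∧
    (g b - g a + (1 / (2 * D)) * ∑ i ∈ Finset.range m, (g' (p (i + 1)) - g' (p i)) ^ 2
      ≥ g b - g a + (g' b - g' a) ^ 2 / (2 * D * (m : ℝ))) :=
  partition_lemma_convex_general a b D hD g g' hderiv hlip hmono m p hp0 hpm hpmono
end
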